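/- arXiv:2405.08993 — 6 statements merged into one kernel-verified Lean document; each statement's English description precedes it below -/
import Mathlib

section
/- Let C be a reduced bigraded complex over F[U,V] with basis B, and let a, b, c ∈ B satisfy ⟨∂b, Ua⟩ = 1 and ⟨∂c, Vb⟩ = 1. Assume moreover that for all y ∈ B and k ≥ 1, if ⟨∂c, V^k y⟩ ≠ 0 then (k,y) = (1,b), and if ⟨∂y, U^k a⟩ ≠ 0 then (k,y) = (1,b). Then there exists d ∈ B with ⟨∂c, Ud⟩ = 1 and ⟨∂d, Va⟩ = 1, so that a, b, c, d form a square. -/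
/-! The coefficient of `U V a` in `∂² c = 0` counts, mod 2, the two-step paths from `c` to `a`
with one `U` step and one `V` step; as `C` is reduced, no step is constant, so each path is
either `V`-then-`U` or `U`-then-`V`. The only `V`-then-`U` path goes through `b`, hence the number
of `U`-then-`V` paths is odd, and the middle vertex of one of them is `d`. -/

open Finset

/-- Bigraded data over `𝔽 = ℤ/2ℤ`: a finite basis `B`, a bigrading
`(grU, grV)`, and a "differential" recorded via its coefficients
`d x y a b = ⟨∂x, U^a V^b y⟩ ∈ 𝔽`.  A bigraded complex over `𝔽[U,V]`
(resp. over `R = 𝔽[U,V]/(UV)`) is such a datum satisfying the predicate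
`IsComplexPoly` (resp. `IsComplexR`) below. -/
structure GCx where
  B : Type
  fin : Fintype B
  grU : B → ℤ
  grV : B → ℤ
  d : B → B → ℕ → ℕ → ZMod 2

attribute [instance] GCx.fin

namespace GCx

/-- The bidegree `(−1,−1)` condition on the differential. -/
def Bidegree (C : GCx) : Prop :=
  ∀ (x y : C.B) (a b : ℕ), C.d x y a b ≠ 0 →
    C.grU y - 2 * (a : ℤ) = C.grU x - 1 ∧ C.grV y - 2 * (b : ℤ) = C.grV x - 1

/-- Coefficients of the composite of two `𝔽[U,V]`-linear maps recorded via
their coefficient matrices (a Cauchy product). -/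
def conv {B₁ B₂ B₃ : Type} [Fintype B₂]
    (f : B₁ → B₂ → ℕ → ℕ → ZMod 2) (g : B₂ → B₃ → ℕ → ℕ → ZMod 2) :
    B₁ → B₃ → ℕ → ℕ → ZMod 2 := fun x z a b =>
  ∑ y : B₂, ∑ a₁ ∈ Finset.range (a + 1), ∑ b₁ ∈ Finset.range (b + 1),
    f x y a₁ b₁ * g y z (a - a₁) (b - b₁)

/-- `C` is a bigraded complex over `𝔽[U,V]`: bidegree condition plus `∂ ∘ ∂ = 0`. -/
def IsComplexPoly (C : GCx) : Prop :=
  C.Bidegree ∧ ∀ (x z : C.B) (a b : ℕ), conv C.d C.d x z a b = 0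

/-- Supported away from the ideal `(UV)`: the coefficient matrix of an object
over `R = 𝔽[U,V]/(UV)`. -/
def SuppR {B₁ B₂ : Type} (f : B₁ → B₂ → ℕ → ℕ → ZMod 2) : Prop :=
  ∀ x y a b, 0 < a → 0 < b → f x y a b = 0

/-- `C` is a bigraded complex over `R = 𝔽[U,V]/(UV)`: the differential only has
monomials `U^a V^b` with `min a b = 0`, and `∂ ∘ ∂ = 0` holds for all
coefficients of monomials surviving in `R`. -/
def IsComplexR (C : GCx) : Prop :=
  C.Bidegree ∧ SuppR C.d ∧
    ∀ (x z : C.B) (a b : ℕ), a = 0 ∨ b = 0 → conv C.d C.d x z a b = 0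

/-- The complex is reduced: no constant components in `∂`. -/
def Reduced (C : GCx) : Prop := ∀ x y : C.B, C.d x y 0 0 = 0

/-- `σ(x) = grU(x) + grV(x)`. -/
def σ (C : GCx) (x : C.B) : ℤ := C.grU x + C.grV x

/-- The width `w(C) = (max σ − min σ)/2 + 1` (as a rational number). -/
noncomputable def width (C : GCx) [Nonempty C.B] : ℚ :=
  ((univ.sup' univ_nonempty C.σ - univ.inf' univ_nonempty C.σ : ℤ) : ℚ) / 2 + 1

/-- The reduction `C ⊗ R`: kill all coefficients of monomials in `(UV)`. -/
def reduce (C : GCx) : GCx where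
  B := C.B
  fin := C.fin
  grU := C.grU
  grV := C.grV
  d := fun x y a b => if 0 < a ∧ 0 < b then 0 else C.d x y a b

/-- Direct sum of two bigraded data. -/
def dsum (C C' : GCx) : GCx where
  B := C.B ⊕ C'.B
  fin := inferInstance
  grU := Sum.elim C.grU C'.grU
  grV := Sum.elim C.grV C'.grV
  d := fun x y a b =>
    match x, y with
    | Sum.inl x, Sum.inl y => C.d x y a b
    | Sum.inr x, Sum.inr y => C'.d x y a b
    | _, _ => 0

/-- Direct sum of a finite family of bigraded data. -/
def famSum {k : ℕ} (L : Fin k → GCx) : GCx where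
  B := Σ i, (L i).B
  fin := inferInstance
  grU := fun x => (L x.1).grU x.2
  grV := fun x => (L x.1).grV x.2
  d := fun x y a b =>
    if h : x.1 = y.1 then
      (L y.1).d (cast (congrArg (fun i => (L i).B) h) x.2) y.2 a b
    else 0

open Classical in
/-- Coefficients of the identity map. -/
noncomputable def delta (C : GCx) : C.B → C.B → ℕ → ℕ → ZMod 2 :=
  fun x y a b => if x = y ∧ a = 0 ∧ b = 0 then 1 else 0

/-- A grading-preserving map recorded by its coefficients. -/
def GradedHom (C C' : GCx) (φ : C.B → C'.B → ℕ → ℕ → ZMod 2) : Prop :=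
  ∀ (x : C.B) (y : C'.B) (a b : ℕ), φ x y a b ≠ 0 →
    C'.grU y - 2 * (a : ℤ) = C.grU x ∧ C'.grV y - 2 * (b : ℤ) = C.grV x

/-- Isomorphism of bigraded complexes over `𝔽[U,V]`: a grading-preserving
module isomorphism commuting with the differentials. -/
def IsoPoly (C C' : GCx) : Prop :=
  ∃ (φ : C.B → C'.B → ℕ → ℕ → ZMod 2) (ψ : C'.B → C.B → ℕ → ℕ → ZMod 2),
    GradedHom C C' φ ∧ GradedHom C' C ψ ∧
    (∀ x z a b, conv C.d φ x z a b = conv φ C'.d x z a b) ∧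
    (∀ x z a b, conv C'.d ψ x z a b = conv ψ C.d x z a b) ∧
    (∀ x z a b, conv φ ψ x z a b = delta C x z a b) ∧
    (∀ x z a b, conv ψ φ x z a b = delta C' x z a b)

/-- Isomorphism of bigraded complexes over `R = 𝔽[U,V]/(UV)`: all identities
are required on the coefficients of the monomials `U^a V^b`, `min a b = 0`,
surviving in `R`. -/
def IsoR (C C' : GCx) : Prop :=
  ∃ (φ : C.B → C'.B → ℕ → ℕ → ZMod 2) (ψ : C'.B → C.B → ℕ → ℕ → ZMod 2),
    SuppR φ ∧ SuppR ψ ∧ GradedHom C C' φ ∧ GradedHom C' C ψ ∧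
    (∀ x z a b, a = 0 ∨ b = 0 → conv C.d φ x z a b = conv φ C'.d x z a b) ∧
    (∀ x z a b, a = 0 ∨ b = 0 → conv C'.d ψ x z a b = conv ψ C.d x z a b) ∧
    (∀ x z a b, a = 0 ∨ b = 0 → conv φ ψ x z a b = delta C x z a b) ∧
    (∀ x z a b, a = 0 ∨ b = 0 → conv ψ φ x z a b = delta C' x z a b)

/-- The square `K₁(p,q)`: basis `a,b,c,d = 0,1,2,3`, differential
`∂a = Ub + Vc`, `∂b = Vd`, `∂c = Ud`, `∂d = 0`. -/
def K1 (p q : ℤ) : GCx where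
  B := Fin 4
  fin := inferInstance
  grU := ![p, p + 1, p - 1, p]
  grV := ![q, q - 1, q + 1, q]
  d := fun x y a b =>
    if (x = 0 ∧ y = 1 ∧ a = 1 ∧ b = 0) ∨ (x = 0 ∧ y = 2 ∧ a = 0 ∧ b = 1) ∨
       (x = 1 ∧ y = 3 ∧ a = 0 ∧ b = 1) ∨ (x = 2 ∧ y = 3 ∧ a = 1 ∧ b = 0)
    then 1 else 0

/-- The special shape `K₀(p,q)`: basis `a,b,c,d,e,f = 0,1,2,3,4,5`,
differential `∂a = Vf`, `∂b = U²a + UVe`, `∂c = Ud + Vb`, `∂d = V²e + UVa`,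
`∂e = Uf`, `∂f = 0`. -/
def K0 (p q : ℤ) : GCx where
  B := Fin 6
  fin := inferInstance
  grU := ![p, p - 3, p - 2, p - 1, p - 2, p - 1]
  grV := ![q, q + 1, q, q - 1, q + 2, q + 1]
  d := fun x y a b =>
    if (x = 0 ∧ y = 5 ∧ a = 0 ∧ b = 1) ∨
       (x = 1 ∧ y = 0 ∧ a = 2 ∧ b = 0) ∨ (x = 1 ∧ y = 4 ∧ a = 1 ∧ b = 1) ∨
       (x = 2 ∧ y = 3 ∧ a = 1 ∧ b = 0) ∨ (x = 2 ∧ y = 1 ∧ a = 0 ∧ b = 1) ∨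
       (x = 3 ∧ y = 4 ∧ a = 0 ∧ b = 2) ∨ (x = 3 ∧ y = 0 ∧ a = 1 ∧ b = 1) ∨
       (x = 4 ∧ y = 5 ∧ a = 1 ∧ b = 0)
    then 1 else 0

/-- `S` is, up to an overall shift of both gradings, a standard complex
`C(a₁, …, a_{2n})` over `R`: there is a basis `x₀,…,x_{2n}` such that the
only nonzero components of `∂` are, for each `1 ≤ i ≤ 2n`, a single arrow
joining `x_{i−1}` and `x_i`, horizontal (a power of `U`) for odd `i` and
vertical (a power of `V`) for even `i`, with length `|a_i|` and direction
determined by the sign of `a_i`.  (Gradings satisfying the bidegree condition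
are determined by these data up to an overall shift.) -/
def IsStandardUpToShift (S : GCx) : Prop :=
  SuppR S.d ∧ S.Bidegree ∧
  ∃ (n : ℕ) (A : Fin (2 * n) → ℤ) (e : Fin (2 * n + 1) ≃ S.B),
    (∀ j, A j ≠ 0) ∧
    ∀ (x y : Fin (2 * n + 1)) (u v : ℕ),
      S.d (e x) (e y) u v ≠ 0 ↔
        ∃ j : Fin (2 * n),
          ((j : ℕ) % 2 = 0 ∧ v = 0 ∧
            ((0 < A j ∧ x = j.succ ∧ y = j.castSucc ∧ (u : ℤ) = A j) ∨
             (A j < 0 ∧ x = j.castSucc ∧ y = j.succ ∧ (u : ℤ) = -A j))) ∨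
          ((j : ℕ) % 2 = 1 ∧ u = 0 ∧
            ((0 < A j ∧ x = j.succ ∧ y = j.castSucc ∧ (v : ℤ) = A j) ∨
             (A j < 0 ∧ x = j.castSucc ∧ y = j.succ ∧ (v : ℤ) = -A j)))

/-- `L` is, up to an overall shift of both gradings, a closed width-2
staircase over `R`: a cyclic basis `y₁, …, y_{2m}` (`m ≥ 2`, indices mod
`2m`), exponents `cᵢ ∈ {1,2}` exactly two of which equal `2`, such that the
only nonzero components of `∂` are one arrow `U^{cᵢ}` joining `yᵢ` and
`y_{i+1}` for each odd `i` and one arrow `V^{cᵢ}` joining them for each even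
`i` (in exactly one of the two possible directions each). -/
def IsStaircaseUpToShift (L : GCx) : Prop :=
  SuppR L.d ∧ L.Bidegree ∧
  ∃ (m : ℕ) (hm : 2 ≤ m),
    let next : Fin (2 * m) → Fin (2 * m) :=
      fun i => ⟨((i : ℕ) + 1) % (2 * m), Nat.mod_lt _ (by omega)⟩
    ∃ (c : Fin (2 * m) → ℕ) (dir : Fin (2 * m) → Bool) (e : Fin (2 * m) ≃ L.B),
      (∀ i, c i = 1 ∨ c i = 2) ∧
      ((univ.filter fun i => c i = 2).card = 2) ∧
      ∀ (x y : Fin (2 * m)) (u v : ℕ),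
        L.d (e x) (e y) u v ≠ 0 ↔
          ∃ i : Fin (2 * m),
            (if dir i then x = i ∧ y = next i else x = next i ∧ y = i) ∧
            (if (i : ℕ) % 2 = 0 then u = c i ∧ v = 0 else u = 0 ∧ v = c i)

/-- The (distinguished) basis of `C` is simultaneously horizontally and
vertically simplified: each basis element has at most one outgoing horizontal,
outgoing vertical, incoming horizontal, and incoming vertical component. -/
def Simplified (C : GCx) : Prop :=
  (∀ (x y₁ y₂ : C.B) (k₁ k₂ : ℕ), 1 ≤ k₁ → 1 ≤ k₂ →
    C.d x y₁ k₁ 0 ≠ 0 → C.d x y₂ k₂ 0 ≠ 0 → y₁ = y₂ ∧ k₁ = k₂) ∧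
  (∀ (x y₁ y₂ : C.B) (k₁ k₂ : ℕ), 1 ≤ k₁ → 1 ≤ k₂ →
    C.d x y₁ 0 k₁ ≠ 0 → C.d x y₂ 0 k₂ ≠ 0 → y₁ = y₂ ∧ k₁ = k₂) ∧
  (∀ (x y₁ y₂ : C.B) (k₁ k₂ : ℕ), 1 ≤ k₁ → 1 ≤ k₂ →
    C.d y₁ x k₁ 0 ≠ 0 → C.d y₂ x k₂ 0 ≠ 0 → y₁ = y₂ ∧ k₁ = k₂) ∧
  (∀ (x y₁ y₂ : C.B) (k₁ k₂ : ℕ), 1 ≤ k₁ → 1 ≤ k₂ →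
    C.d y₁ x 0 k₁ ≠ 0 → C.d y₂ x 0 k₂ ≠ 0 → y₁ = y₂ ∧ k₁ = k₂)

end GCx

namespace GCx

theorem conv_apply_one_one {B₁ B₂ B₃ : Type} [Fintype B₂]
    (f : B₁ → B₂ → ℕ → ℕ → ZMod 2) (g : B₂ → B₃ → ℕ → ℕ → ZMod 2) (x : B₁) (z : B₃) :
    conv f g x z 1 1 = ∑ y, (f x y 0 0 * g y z 1 1 + f x y 0 1 * g y z 1 0 +
      (f x y 1 0 * g y z 0 1 + f x y 1 1 * g y z 0 0)) := by
  simp only [conv, sum_range_succ, sum_range_zero, zero_add, Nat.sub_self, Nat.sub_zero]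

theorem Reduced.conv_d_d_one_one {C : GCx} (hC : C.Reduced) (x z : C.B) :
    conv C.d C.d x z 1 1 =
      ∑ y, C.d x y 0 1 * C.d y z 1 0 + ∑ y, C.d x y 1 0 * C.d y z 0 1 := by
  rw [conv_apply_one_one, ← sum_add_distrib]
  refine sum_congr rfl fun y _ => ?_
  rw [hC x y, hC y z]
  ring

end GCx

theorem ZMod.eq_one_and_eq_one_of_mul_ne_zero_two {x y : ZMod 2} (h : x * y ≠ 0) :
    x = 1 ∧ y = 1 := by
  revert x y
  decide

open GCx in
theorem completes_to_square_general
    (C : GCx) (hC : C.IsComplexPoly) (hCred : C.Reduced) (a b c : C.B)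
    (hba : C.d b a 1 0 = 1) (hcb : C.d c b 0 1 = 1)
    (hVout : ∀ (y : C.B) (k : ℕ), 1 ≤ k → C.d c y 0 k ≠ 0 → k = 1 ∧ y = b) :
    ∃ d : C.B, C.d c d 1 0 = 1 ∧ C.d d a 0 1 = 1 := by
  have hVU : ∑ y, C.d c y 0 1 * C.d y a 1 0 = 1 := by
    rw [sum_eq_single b, hcb, hba, one_mul]
    · intro y _ hy
      by_contra h
      exact hy (hVout y 1 le_rfl (left_ne_zero_of_mul h)).2
    · exact absurd (mem_univ b)
  have hUV : ∑ y, C.d c y 1 0 * C.d y a 0 1 = 1 := by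
    have := hC.2 c a 1 1
    rwa [hCred.conv_d_d_one_one, hVU, CharTwo.add_eq_zero, eq_comm] at this
  obtain ⟨d, -, hd⟩ := exists_ne_zero_of_sum_ne_zero (hUV ▸ one_ne_zero)
  exact ⟨d, ZMod.eq_one_and_eq_one_of_mul_ne_zero_two hd⟩

open GCx in
/-- If `⟨∂b, Ua⟩ = 1` and `⟨∂c, Vb⟩ = 1`, and `b` (with
length 1) accounts for the only vertical component out of `c` and the only
horizontal component into `a`, then `a, b, c` complete to a square: there is
`d` with `⟨∂c, Ud⟩ = 1` and `⟨∂d, Va⟩ = 1`. -/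
theorem completes_to_square
    (C : GCx) (hC : C.IsComplexPoly) (hCred : C.Reduced) (a b c : C.B)
    (hba : C.d b a 1 0 = 1) (hcb : C.d c b 0 1 = 1)
    (hVout : ∀ (y : C.B) (k : ℕ), 1 ≤ k → C.d c y 0 k ≠ 0 → k = 1 ∧ y = b)
    (hUin : ∀ (y : C.B) (k : ℕ), 1 ≤ k → C.d y a k 0 ≠ 0 → k = 1 ∧ y = b) :
    ∃ d : C.B, C.d c d 1 0 = 1 ∧ C.d d a 0 1 = 1 :=
  completes_to_square_general C hC hCred a b c hba hcb hVout
end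

section
/- Let C be a reduced bigraded complex over F[U,V] with w(C) ≤ 2, and let R = F[U,V]/(UV). Suppose the reduction C ⊗ R decomposes as a direct sum D ⊕ D′ of bigraded complexes over R. Then D is itself the reduction of a bigraded complex over F[U,V]: there exists a reduced bigraded complex D̃ over F[U,V], with the same basis and gradings as D, such that D̃ ⊗ R ≅ D as bigraded complexes over R. -/
open Finset

namespace GCx

@[simp] lemma reduce_grU' (C : GCx) : C.reduce.grU = C.grU := rfl
@[simp] lemma reduce_grV' (C : GCx) : C.reduce.grV = C.grV := rfl
lemma reduce_d' (C : GCx) (x y : C.B) (a b : ℕ) :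
    C.reduce.d x y a b = if 0 < a ∧ 0 < b then 0 else C.d x y a b := rfl
@[simp] lemma dsum_grU_inl (C C' : GCx) (x : C.B) : (C.dsum C').grU (Sum.inl x) = C.grU x := rfl
@[simp] lemma dsum_grU_inr (C C' : GCx) (x : C'.B) : (C.dsum C').grU (Sum.inr x) = C'.grU x := rfl
@[simp] lemma dsum_grV_inl (C C' : GCx) (x : C.B) : (C.dsum C').grV (Sum.inl x) = C.grV x := rfl
@[simp] lemma dsum_grV_inr (C C' : GCx) (x : C'.B) : (C.dsum C').grV (Sum.inr x) = C'.grV x := rfl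
lemma dsum_d_ll (C C' : GCx) (x y : C.B) (a b : ℕ) :
    (C.dsum C').d (Sum.inl x) (Sum.inl y) a b = C.d x y a b := rfl
lemma dsum_d_lr (C C' : GCx) (x : C.B) (y : C'.B) (a b : ℕ) :
    (C.dsum C').d (Sum.inl x) (Sum.inr y) a b = 0 := rfl
lemma dsum_d_rl (C C' : GCx) (x : C'.B) (y : C.B) (a b : ℕ) :
    (C.dsum C').d (Sum.inr x) (Sum.inl y) a b = 0 := rfl

end GCx

namespace SummandLiftAux

open GCx

abbrev PS : Type := PowerSeries (PowerSeries (ZMod 2))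

noncomputable def co (F : PS) (a b : ℕ) : ZMod 2 :=
  PowerSeries.coeff (R := ZMod 2) a (PowerSeries.coeff (R := PowerSeries (ZMod 2)) b F)

noncomputable def toM {B₁ B₂ : Type} (f : B₁ → B₂ → ℕ → ℕ → ZMod 2) :
    Matrix B₁ B₂ PS :=
  Matrix.of fun x y => PowerSeries.mk fun b => PowerSeries.mk fun a => f x y a b

lemma co_toM {B₁ B₂ : Type} (f : B₁ → B₂ → ℕ → ℕ → ZMod 2) (x : B₁) (y : B₂) (a b : ℕ) :
    co (toM f x y) a b = f x y a b := by
  simp [co, toM, PowerSeries.coeff_mk]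

lemma co_sum {ι : Type} (s : Finset ι) (F : ι → PS) (a b : ℕ) :
    co (∑ i ∈ s, F i) a b = ∑ i ∈ s, co (F i) a b := by
  simp [co]

lemma co_mul (F G : PS) (a b : ℕ) :
    co (F * G) a b = ∑ a₁ ∈ Finset.range (a+1), ∑ b₁ ∈ Finset.range (b+1),
      co F a₁ b₁ * co G (a - a₁) (b - b₁) := by
  have h1 : co (F*G) a b = ∑ b₁ ∈ Finset.range (b+1), ∑ a₁ ∈ Finset.range (a+1),
      co F a₁ b₁ * co G (a-a₁) (b-b₁) := by
    unfold co
    rw [PowerSeries.coeff_mul, map_sum, Finset.Nat.sum_antidiagonal_eq_sum_range_succ_mk]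
    exact Finset.sum_congr rfl fun b₁ _ => by
      rw [PowerSeries.coeff_mul, Finset.Nat.sum_antidiagonal_eq_sum_range_succ_mk]
  rw [h1, Finset.sum_comm]

lemma conv_eq_co {B₁ B₂ B₃ : Type} [Fintype B₂]
    (f : B₁ → B₂ → ℕ → ℕ → ZMod 2) (g : B₂ → B₃ → ℕ → ℕ → ZMod 2)
    (x : B₁) (z : B₃) (a b : ℕ) :
    GCx.conv f g x z a b = co ((toM f * toM g) x z) a b := by
  rw [Matrix.mul_apply, co_sum]
  unfold GCx.conv
  refine Finset.sum_congr rfl fun y _ => ?_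
  rw [co_mul]
  exact Finset.sum_congr rfl fun a₁ _ => Finset.sum_congr rfl fun b₁ _ => by
    rw [co_toM, co_toM]

lemma matrix_ext_co {B₁ B₂ : Type} (M N : Matrix B₁ B₂ PS)
    (h : ∀ x y a b, co (M x y) a b = co (N x y) a b) : M = N := by
  ext x y b a
  exact h x y a b

lemma toM_conv {B₁ B₂ B₃ : Type} [Fintype B₂]
    (f : B₁ → B₂ → ℕ → ℕ → ZMod 2) (g : B₂ → B₃ → ℕ → ℕ → ZMod 2) :
    toM (GCx.conv f g) = toM f * toM g :=
  matrix_ext_co _ _ fun x z a b => by rw [co_toM, conv_eq_co]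

lemma toM_eq_zero {B₁ B₂ : Type} {f : B₁ → B₂ → ℕ → ℕ → ZMod 2}
    (h : ∀ x y a b, f x y a b = 0) : toM f = 0 :=
  matrix_ext_co _ _ fun x y a b => by rw [co_toM, h]; simp [co]

lemma co_one_matrix {B : Type} [DecidableEq B] (x z : B) (a b : ℕ) :
    co ((1 : Matrix B B PS) x z) a b = if x = z ∧ a = 0 ∧ b = 0 then 1 else 0 := by
  rcases eq_or_ne x z with h | h
  · subst h
    simp only [Matrix.one_apply_eq, co]
    rw [PowerSeries.coeff_one]
    by_cases hb : b = 0
    · subst hb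
      rw [if_pos rfl, PowerSeries.coeff_one]
      by_cases ha : a = 0 <;> simp [ha]
    · rw [if_neg hb]
      simp [hb]
  · simp [Matrix.one_apply_ne h, co, h]

lemma toM_delta (C : GCx) [DecidableEq C.B] : toM (GCx.delta C) = 1 :=
  matrix_ext_co _ _ fun x z a b => by
    rw [co_toM, co_one_matrix]
    unfold GCx.delta
    split_ifs <;> rfl

lemma conv_delta_left {C : GCx} {B₂ : Type} (f : C.B → B₂ → ℕ → ℕ → ZMod 2)
    (x : C.B) (z : B₂) (a b : ℕ) :
    GCx.conv (GCx.delta C) f x z a b = f x z a b := by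
  classical
  rw [conv_eq_co, toM_delta, Matrix.one_mul, co_toM]

lemma conv_delta_right {C : GCx} {B₁ : Type} (f : B₁ → C.B → ℕ → ℕ → ZMod 2)
    (x : B₁) (z : C.B) (a b : ℕ) :
    GCx.conv f (GCx.delta C) x z a b = f x z a b := by
  classical
  rw [conv_eq_co, toM_delta, Matrix.mul_one, co_toM]

lemma conv_assoc {B₁ B₂ B₃ B₄ : Type} [Fintype B₂] [Fintype B₃]
    (f : B₁ → B₂ → ℕ → ℕ → ZMod 2) (g : B₂ → B₃ → ℕ → ℕ → ZMod 2)
    (h : B₃ → B₄ → ℕ → ℕ → ZMod 2) (x : B₁) (w : B₄) (a b : ℕ) :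
    GCx.conv f (GCx.conv g h) x w a b = GCx.conv (GCx.conv f g) h x w a b := by
  rw [conv_eq_co, conv_eq_co, toM_conv, toM_conv, Matrix.mul_assoc]

lemma conv_congr_left {B₁ B₂ B₃ : Type} [Fintype B₂]
    {f f' : B₁ → B₂ → ℕ → ℕ → ZMod 2} {g : B₂ → B₃ → ℕ → ℕ → ZMod 2}
    {x : B₁} {z : B₃} {a b : ℕ}
    (h : ∀ y a' b', a' ≤ a → b' ≤ b → f x y a' b' = f' x y a' b') :
    GCx.conv f g x z a b = GCx.conv f' g x z a b := by
  unfold GCx.conv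
  refine Finset.sum_congr rfl fun y _ => Finset.sum_congr rfl fun a₁ ha₁ =>
    Finset.sum_congr rfl fun b₁ hb₁ => ?_
  rw [h y a₁ b₁ (Nat.lt_succ_iff.mp (Finset.mem_range.mp ha₁))
    (Nat.lt_succ_iff.mp (Finset.mem_range.mp hb₁))]

lemma conv_congr_right {B₁ B₂ B₃ : Type} [Fintype B₂]
    {f : B₁ → B₂ → ℕ → ℕ → ZMod 2} {g g' : B₂ → B₃ → ℕ → ℕ → ZMod 2}
    {x : B₁} {z : B₃} {a b : ℕ}
    (h : ∀ y a' b', a' ≤ a → b' ≤ b → g y z a' b' = g' y z a' b') :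
    GCx.conv f g x z a b = GCx.conv f g' x z a b := by
  unfold GCx.conv
  refine Finset.sum_congr rfl fun y _ => Finset.sum_congr rfl fun a₁ _ =>
    Finset.sum_congr rfl fun b₁ _ => ?_
  rw [h y (a - a₁) (b - b₁) (Nat.sub_le a a₁) (Nat.sub_le b b₁)]

lemma conv_ne_zero {B₁ B₂ B₃ : Type} [Fintype B₂]
    {f : B₁ → B₂ → ℕ → ℕ → ZMod 2} {g : B₂ → B₃ → ℕ → ℕ → ZMod 2}
    {x : B₁} {z : B₃} {a b : ℕ} (h : GCx.conv f g x z a b ≠ 0) :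
    ∃ y a₁ b₁, a₁ ≤ a ∧ b₁ ≤ b ∧ f x y a₁ b₁ ≠ 0 ∧ g y z (a - a₁) (b - b₁) ≠ 0 := by
  by_contra hc
  push_neg at hc
  apply h
  unfold GCx.conv
  refine Finset.sum_eq_zero fun y _ => Finset.sum_eq_zero fun a₁ ha₁ =>
    Finset.sum_eq_zero fun b₁ hb₁ => ?_
  rcases eq_or_ne (f x y a₁ b₁) 0 with hf | hf
  · rw [hf, zero_mul]
  · rw [hc y a₁ b₁ (Nat.lt_succ_iff.mp (Finset.mem_range.mp ha₁))
      (Nat.lt_succ_iff.mp (Finset.mem_range.mp hb₁)) hf, mul_zero]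

end SummandLiftAux

open GCx in
/-- If `C` is a reduced complex over `𝔽[U,V]` with
`w(C) ≤ 2` and its reduction splits as `D ⊕ D'` over `R`, then `D` is itself
the reduction of a (reduced) bigraded complex over `𝔽[U,V]` with the same
basis and gradings as `D`. -/
theorem summand_of_reduction_lifts
    (C : GCx) [Nonempty C.B]
    (hC : C.IsComplexPoly) (hCred : C.Reduced) (hw : C.width ≤ 2)
    (D D' : GCx) (hD : D.IsComplexR) (hD' : D'.IsComplexR)
    (hiso : IsoR C.reduce (D.dsum D')) :
    ∃ dt : D.B → D.B → ℕ → ℕ → ZMod 2,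
      (GCx.mk D.B D.fin D.grU D.grV dt).IsComplexPoly ∧
      (GCx.mk D.B D.fin D.grU D.grV dt).Reduced ∧
      IsoR (GCx.mk D.B D.fin D.grU D.grV dt).reduce D := by
  classical
  obtain ⟨φ, ψ, hφS, hψS, hφG, hψG, hc1, hc2, hφψ, hψφ⟩ := hiso
  -- the width-2 window for C
  have hwin : ∀ x y : C.B, C.σ x - C.σ y ≤ 2 := by
    intro x y
    have h1 : C.σ x ≤ univ.sup' univ_nonempty C.σ := Finset.le_sup' _ (mem_univ x)
    have h2 : univ.inf' univ_nonempty C.σ ≤ C.σ y := Finset.inf'_le _ (mem_univ y)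
    have h3 : ((univ.sup' univ_nonempty C.σ - univ.inf' univ_nonempty C.σ : ℤ) : ℚ) ≤ 2 := by
      unfold GCx.width at hw; linarith
    have h4 : (univ.sup' univ_nonempty C.σ - univ.inf' univ_nonempty C.σ : ℤ) ≤ 2 := by
      exact_mod_cast h3
    omega
  -- every basis element of D ⊕ D' has the σ of some element of C
  have hσE : ∀ w : (D.dsum D').B, ∃ x : C.B, C.σ x = (D.dsum D').σ w := by
    intro w
    have h := hψφ w w 0 0 (Or.inl rfl)
    have h1 : GCx.conv ψ φ w w 0 0 ≠ 0 := by
      rw [h]; unfold GCx.delta; simp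
    obtain ⟨y, a₁, b₁, ha₁, hb₁, hne, -⟩ := SummandLiftAux.conv_ne_zero h1
    obtain rfl : a₁ = 0 := Nat.le_zero.mp ha₁
    obtain rfl : b₁ = 0 := Nat.le_zero.mp hb₁
    have g := hψG w y 0 0 hne
    refine ⟨y, ?_⟩
    simp only [GCx.σ, GCx.reduce_grU', GCx.reduce_grV'] at g ⊢
    omega
  have hwinE : ∀ w w' : (D.dsum D').B, (D.dsum D').σ w' - (D.dsum D').σ w ≤ 2 := by
    intro w w'
    obtain ⟨x, hx⟩ := hσE w
    obtain ⟨x', hx'⟩ := hσE w'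
    rw [← hx, ← hx']
    exact hwin x' x
  -- the isomorphism is a genuine isomorphism over 𝔽[U,V]
  have hφψ_full : ∀ x z a b, GCx.conv φ ψ x z a b = GCx.delta C.reduce x z a b := by
    intro x z a b
    by_cases hab : a = 0 ∨ b = 0
    · exact hφψ x z a b hab
    push_neg at hab
    have hz : GCx.conv φ ψ x z a b = 0 := by
      by_contra hne
      obtain ⟨y, a₁, b₁, ha₁, hb₁, h1, h2⟩ := SummandLiftAux.conv_ne_zero hne
      have g1 := hφG x y a₁ b₁ h1
      have g2 := hψG y z (a - a₁) (b - b₁) h2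
      have hw2 := hwin z x
      simp only [GCx.σ, GCx.reduce_grU', GCx.reduce_grV'] at g1 g2 hw2
      omega
    rw [hz]
    unfold GCx.delta
    rw [if_neg (fun hh => hab.1 hh.2.1)]
  have hψφ_full : ∀ x z a b, GCx.conv ψ φ x z a b = GCx.delta (D.dsum D') x z a b := by
    intro x z a b
    by_cases hab : a = 0 ∨ b = 0
    · exact hψφ x z a b hab
    push_neg at hab
    have hz : GCx.conv ψ φ x z a b = 0 := by
      by_contra hne
      obtain ⟨y, a₁, b₁, ha₁, hb₁, h1, h2⟩ := SummandLiftAux.conv_ne_zero hne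
      have g1 := hψG x y a₁ b₁ h1
      have g2 := hφG y z (a - a₁) (b - b₁) h2
      have hwE := hwinE x z
      simp only [GCx.σ, GCx.reduce_grU', GCx.reduce_grV'] at g1 g2 hwE
      omega
    rw [hz]
    unfold GCx.delta
    rw [if_neg (fun hh => hab.1 hh.2.1)]
  have hfunφψ : GCx.conv φ ψ = GCx.delta C.reduce :=
    funext fun x => funext fun z => funext fun a => funext fun b => hφψ_full x z a b
  have hfunψφ : GCx.conv ψ φ = GCx.delta (D.dsum D') :=
    funext fun x => funext fun z => funext fun a => funext fun b => hψφ_full x z a b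
  have hMφψ : SummandLiftAux.toM (B₁ := C.B) φ * SummandLiftAux.toM (B₂ := C.B) ψ = 1 := by
    refine SummandLiftAux.matrix_ext_co _ _ fun x z a b => ?_
    erw [← SummandLiftAux.conv_eq_co, SummandLiftAux.co_one_matrix]
    refine Eq.trans (hφψ_full x z a b) ?_
    unfold GCx.delta
    split_ifs with h1 h2 h3 <;> [rfl; exact absurd h1 h2; exact absurd h3 h1; rfl]
  -- the transported differential on D ⊕ D'
  set dd : (D.dsum D').B → (D.dsum D').B → ℕ → ℕ → ZMod 2 :=
    GCx.conv ψ (GCx.conv C.d φ) with hdd_def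
  have hd2M : SummandLiftAux.toM C.d * SummandLiftAux.toM C.d = 0 := by
    rw [← SummandLiftAux.toM_conv]
    exact SummandLiftAux.toM_eq_zero hC.2
  have hMdd : SummandLiftAux.toM dd =
      SummandLiftAux.toM (B₂ := C.B) ψ *
        (SummandLiftAux.toM C.d * SummandLiftAux.toM (B₁ := C.B) φ) := by
    refine SummandLiftAux.matrix_ext_co _ _ fun w w' a b => ?_
    rw [SummandLiftAux.co_toM]
    have e := SummandLiftAux.toM_conv (B₂ := C.B) C.d φ
    calc dd w w' a b = SummandLiftAux.co ((SummandLiftAux.toM (B₂ := C.B) ψ *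
          SummandLiftAux.toM (GCx.conv C.d φ)) w w') a b := SummandLiftAux.conv_eq_co _ _ w w' a b
      _ = _ := congrArg (fun M => SummandLiftAux.co ((SummandLiftAux.toM (B₂ := C.B) ψ * M) w w') a b) e
  have hdd2 : ∀ w w' a b, GCx.conv dd dd w w' a b = 0 := by
    intro w w' a b
    rw [SummandLiftAux.conv_eq_co, hMdd]
    have hzero : (SummandLiftAux.toM (B₂ := C.B) ψ *
          (SummandLiftAux.toM C.d * SummandLiftAux.toM (B₁ := C.B) φ)) *
        (SummandLiftAux.toM (B₂ := C.B) ψ *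
          (SummandLiftAux.toM C.d * SummandLiftAux.toM (B₁ := C.B) φ)) = 0 := by
      rw [Matrix.mul_assoc, Matrix.mul_assoc,
        ← Matrix.mul_assoc (SummandLiftAux.toM (B₁ := C.B) φ),
        hMφψ, Matrix.one_mul, ← Matrix.mul_assoc (SummandLiftAux.toM C.d), hd2M,
        Matrix.zero_mul, Matrix.mul_zero]
    rw [hzero]
    simp [SummandLiftAux.co]
  -- the reduction of dd is the differential of D ⊕ D'
  have hdd_red : ∀ w w' a b, a = 0 ∨ b = 0 → dd w w' a b = (D.dsum D').d w w' a b := by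
    intro w w' a b hab
    have e1 : dd w w' a b = GCx.conv ψ (GCx.conv φ (D.dsum D').d) w w' a b := by
      rw [hdd_def]
      apply SummandLiftAux.conv_congr_right
      intro y a' b' ha' hb'
      have hab' : a' = 0 ∨ b' = 0 := by omega
      have e2 : GCx.conv C.d φ y w' a' b' = GCx.conv C.reduce.d φ y w' a' b' := by
        apply SummandLiftAux.conv_congr_left
        intro y2 a'' b'' ha'' hb''
        erw [GCx.reduce_d', if_neg (by omega)]
      erw [e2]
      exact hc1 y w' a' b' hab'
    rw [e1, SummandLiftAux.conv_assoc, hfunψφ, SummandLiftAux.conv_delta_left]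
  -- dd has bidegree (−1, −1)
  have hddB : ∀ w w' a b, dd w w' a b ≠ 0 →
      (D.dsum D').grU w' - 2*(a:ℤ) = (D.dsum D').grU w - 1 ∧
      (D.dsum D').grV w' - 2*(b:ℤ) = (D.dsum D').grV w - 1 := by
    intro w w' a b hne
    rw [hdd_def] at hne
    obtain ⟨y, a₁, b₁, ha₁, hb₁, h1, h2⟩ := SummandLiftAux.conv_ne_zero hne
    obtain ⟨y2, a₂, b₂, ha₂, hb₂, h3, h4⟩ := SummandLiftAux.conv_ne_zero h2
    have g1 := hψG w y a₁ b₁ h1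
    have g2 := hC.1 y y2 a₂ b₂ h3
    have g3 := hφG y2 w' (a - a₁ - a₂) (b - b₁ - b₂) h4
    simp only [GCx.reduce_grU', GCx.reduce_grV'] at g1 g3
    constructor <;> omega
  refine ⟨fun x z a b => dd (Sum.inl x) (Sum.inl z) a b, ⟨?_, ?_⟩, ?_, ?_⟩
  · -- Bidegree
    intro x y a b hne
    exact hddB (Sum.inl x) (Sum.inl y) a b hne
  · -- ∂ ∘ ∂ = 0
    intro x z a b
    have h0 := hdd2 (Sum.inl x) (Sum.inl z) a b
    unfold GCx.conv at h0 ⊢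
    have hsum : ∀ T : (D.dsum D').B → ZMod 2,
        (∑ y, T y) = (∑ y : D.B, T (Sum.inl y)) + (∑ y : D'.B, T (Sum.inr y)) := fun T =>
      Fintype.sum_sum_type T
    rw [hsum (fun y => ∑ a₁ ∈ Finset.range (a+1), ∑ b₁ ∈ Finset.range (b+1),
      dd (Sum.inl x) y a₁ b₁ * dd y (Sum.inl z) (a-a₁) (b-b₁))] at h0
    have hcr : (∑ y : D'.B,
        ∑ a₁ ∈ Finset.range (a+1), ∑ b₁ ∈ Finset.range (b+1),
          dd (Sum.inl x) (Sum.inr y) a₁ b₁ * dd (Sum.inr y) (Sum.inl z) (a-a₁) (b-b₁)) = 0 := by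
      refine Finset.sum_eq_zero fun y _ => Finset.sum_eq_zero fun a₁ _ =>
        Finset.sum_eq_zero fun b₁ _ => ?_
      rcases eq_or_ne (dd (Sum.inl x) (Sum.inr y) a₁ b₁) 0 with h | h
      · rw [h, zero_mul]
      rcases eq_or_ne (dd (Sum.inr y) (Sum.inl z) (a-a₁) (b-b₁)) 0 with h' | h'
      · rw [h', mul_zero]
      exfalso
      have hne1 : ¬(a₁ = 0 ∨ b₁ = 0) := fun hcnd =>
        h (by erw [hdd_red _ _ _ _ hcnd]; exact GCx.dsum_d_lr D D' x y a₁ b₁)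
      have hne2 : ¬(a - a₁ = 0 ∨ b - b₁ = 0) := fun hcnd =>
        h' (by erw [hdd_red _ _ _ _ hcnd]; exact GCx.dsum_d_rl D D' y z (a-a₁) (b-b₁))
      have g1 := hddB _ _ _ _ h
      have g2 := hddB _ _ _ _ h'
      have hwE := hwinE (Sum.inl x) (Sum.inl z)
      simp only [GCx.σ] at hwE
      omega
    rw [hcr, add_zero] at h0
    exact h0
  · -- Reduced
    intro x y
    show dd (Sum.inl x) (Sum.inl y) 0 0 = 0
    rw [hdd_def]
    by_contra h
    obtain ⟨y1, a₁, b₁, ha₁, hb₁, h1, h2⟩ := SummandLiftAux.conv_ne_zero h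
    obtain ⟨y2, a₂, b₂, ha₂, hb₂, h3, h4⟩ := SummandLiftAux.conv_ne_zero h2
    have hz : a₂ = 0 ∧ b₂ = 0 := by omega
    exact h3 (by rw [hz.1, hz.2]; exact hCred y1 y2)
  · -- IsoR of the reduction with D
    refine ⟨GCx.delta D, GCx.delta D, ?_, ?_, ?_, ?_, ?_, ?_, ?_, ?_⟩
    · intro x y a b ha hb
      unfold GCx.delta
      rw [if_neg (fun hh => by omega)]
    · intro x y a b ha hb
      unfold GCx.delta
      rw [if_neg (fun hh => by omega)]
    · intro x y a b hne
      unfold GCx.delta at hne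
      by_cases hcond : x = y ∧ a = 0 ∧ b = 0
      · obtain ⟨rfl, rfl, rfl⟩ := hcond
        constructor <;> simp [GCx.reduce]
      · erw [if_neg hcond] at hne; exact absurd rfl hne
    · intro x y a b hne
      unfold GCx.delta at hne
      by_cases hcond : x = y ∧ a = 0 ∧ b = 0
      · obtain ⟨rfl, rfl, rfl⟩ := hcond
        constructor <;> simp [GCx.reduce]
      · rw [if_neg hcond] at hne; exact absurd rfl hne
    · intro x z a b hab
      calc GCx.conv (GCx.mk D.B D.fin D.grU D.grV
              (fun x z a b => dd (Sum.inl x) (Sum.inl z) a b)).reduce.d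
              (GCx.delta D) x z a b
          = (GCx.mk D.B D.fin D.grU D.grV
              (fun x z a b => dd (Sum.inl x) (Sum.inl z) a b)).reduce.d x z a b :=
            SummandLiftAux.conv_delta_right _ x z a b
        _ = D.d x z a b := by
            show (if 0 < a ∧ 0 < b then (0 : ZMod 2) else dd (Sum.inl x) (Sum.inl z) a b)
              = D.d x z a b
            erw [if_neg (by omega), hdd_red _ _ _ _ hab]
            exact GCx.dsum_d_ll D D' x z a b
        _ = GCx.conv (GCx.delta D) D.d x z a b :=
            (SummandLiftAux.conv_delta_left D.d x z a b).symm
    · intro x z a b hab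
      calc GCx.conv D.d (GCx.delta D) x z a b
          = D.d x z a b := SummandLiftAux.conv_delta_right _ x z a b
        _ = (GCx.mk D.B D.fin D.grU D.grV
              (fun x z a b => dd (Sum.inl x) (Sum.inl z) a b)).reduce.d x z a b := by
            show D.d x z a b
              = (if 0 < a ∧ 0 < b then (0 : ZMod 2) else dd (Sum.inl x) (Sum.inl z) a b)
            erw [if_neg (by omega), hdd_red _ _ _ _ hab]
            exact (GCx.dsum_d_ll D D' x z a b).symm
        _ = GCx.conv (GCx.delta D) (GCx.mk D.B D.fin D.grU D.grV
              (fun x z a b => dd (Sum.inl x) (Sum.inl z) a b)).reduce.d x z a b :=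
            (SummandLiftAux.conv_delta_left _ x z a b).symm
    · intro x z a b hab
      exact SummandLiftAux.conv_delta_left (GCx.delta D) x z a b
    · intro x z a b hab
      exact SummandLiftAux.conv_delta_left (GCx.delta D) x z a b
end

section
/- Let C be a finite-rank free F[U,V]-module with basis B, gradings grU, grV : B → ℤ, and an F[U,V]-linear map ∂ : C → C satisfying the bidegree-(−1,−1) condition and with ⟨∂x, y⟩ = 0 for all x, y ∈ B (reduced), but where ∂ ∘ ∂ = 0 is not assumed. If (max_{x∈B} σ(x) − min_{x∈B} σ(x))/2 + 1 ≤ 2 and ∂ ∘ ∂ ≡ 0 modulo the ideal (U²V²) of F[U,V], then ∂ ∘ ∂ = 0. (Hence for complexes of width at most 2, lifting a differential over F[U,V]/(U²V²) is the same as lifting it over F[U,V].) -/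
open Finset

open GCx in
/-- For reduced bigraded data of width at most 2 satisfying
the bidegree condition, `∂ ∘ ∂ ≡ 0 mod (U²V²)` already implies `∂ ∘ ∂ = 0`. -/
theorem dsquared_mod_U2V2
    (C : GCx) [Nonempty C.B]
    (hbi : C.Bidegree) (hCred : C.Reduced) (hw : C.width ≤ 2)
    (hmod : ∀ (x z : C.B) (a b : ℕ), ¬(2 ≤ a ∧ 2 ≤ b) →
      conv C.d C.d x z a b = 0) :
    ∀ (x z : C.B) (a b : ℕ), conv C.d C.d x z a b = 0 := by
  intro x z a b
  by_cases h : 2 ≤ a ∧ 2 ≤ b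
  · have hwid : (univ.sup' univ_nonempty C.σ - univ.inf' univ_nonempty C.σ : ℤ) ≤ 2 := by
      unfold width at hw
      have h2 : ((univ.sup' univ_nonempty C.σ - univ.inf' univ_nonempty C.σ : ℤ) : ℚ) ≤ 2 := by
        linarith
      exact_mod_cast h2
    unfold conv
    apply Finset.sum_eq_zero; intro y _
    apply Finset.sum_eq_zero; intro a₁ ha₁
    apply Finset.sum_eq_zero; intro b₁ hb₁
    by_cases h1 : C.d x y a₁ b₁ = 0
    · rw [h1, zero_mul]
    by_cases h2 : C.d y z (a - a₁) (b - b₁) = 0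
    · rw [h2, mul_zero]
    exfalso
    obtain ⟨hU1, hV1⟩ := hbi x y a₁ b₁ h1
    obtain ⟨hU2, hV2⟩ := hbi y z _ _ h2
    have ha₁' : a₁ ≤ a := Finset.mem_range_succ_iff.mp ha₁
    have hb₁' : b₁ ≤ b := Finset.mem_range_succ_iff.mp hb₁
    have hsup : C.σ z ≤ univ.sup' univ_nonempty C.σ := Finset.le_sup' _ (mem_univ z)
    have hinf : univ.inf' univ_nonempty C.σ ≤ C.σ x := Finset.inf'_le _ (mem_univ x)
    simp only [GCx.σ] at hsup hinf hwid
    omega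
  · exact hmod x z a b h
end

section
/- Let C be a reduced bigraded complex over F[U,V] with basis B containing distinct elements a, b, c, d such that the only nonzero coefficients ⟨∂x, U^{a'}V^{b'} y⟩ with x, y ∈ {a,b,c,d} are ⟨∂a, Ub⟩ = ⟨∂a, Vc⟩ = ⟨∂b, Vd⟩ = ⟨∂c, Ud⟩ = 1, and such that every component of ∂ between {a,b,c,d} and the remaining basis elements is divisible by UV (i.e., for x ∈ {a,b,c,d}, y ∈ B∖{a,b,c,d}, and a', b' ≥ 0 with min(a',b') = 0, one has ⟨∂x, U^{a'}V^{b'}y⟩ = ⟨∂y, U^{a'}V^{b'}x⟩ = 0). If e ∈ B satisfies ⟨∂e, UVa⟩ = 1, then there exist basis elements f and g with ⟨∂e, Uf⟩ = 1, ⟨∂f, UVb⟩ = 1, ⟨∂e, Vg⟩ = 1, and ⟨∂g, UVc⟩ = 1. -/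
open Finset

private lemma zmod2_ne_zero {x : ZMod 2} (h : x ≠ 0) : x = 1 := by
  revert h; revert x; decide

open Classical in
private lemma aux_key {B : Type} [Fintype B] (D : B → B → ℕ → ℕ → ZMod 2)
    (e a t : B)
    (hconv : GCx.conv D D e t 2 1 = 0)
    (hred : ∀ x y, D x y 0 0 = 0)
    (h10 : ∀ y, D y t 1 0 = if y = a then 1 else 0)
    (h01 : ∀ y, D y t 0 1 = 0)
    (h20 : ∀ y, D y t 2 0 = 0)
    (hea : D e a 1 1 = 1) :
    ∃ f, D e f 1 0 = 1 ∧ D f t 1 1 = 1 := by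
  have hsum : (∑ y, D e y 1 0 * D y t 1 1) ≠ 0 := by
    unfold GCx.conv at hconv
    have heq : (∑ y, (D e y 1 0 * D y t 1 1 +
        D e y 1 1 * (if y = a then (1 : ZMod 2) else 0))) =
        ∑ y, ∑ a₁ ∈ Finset.range (2 + 1), ∑ b₁ ∈ Finset.range (1 + 1),
          D e y a₁ b₁ * D y t (2 - a₁) (1 - b₁) := by
      refine Finset.sum_congr rfl fun y _ => ?_
      simp [Finset.sum_range_succ, hred, h01, h20, h10]
    have hconv' := heq.trans hconv
    rw [Finset.sum_add_distrib] at hconv'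
    have h2 : (∑ y, D e y 1 1 * (if y = a then (1 : ZMod 2) else 0)) = 1 := by
      rw [Finset.sum_eq_single a]
      · simp [hea]
      · intro y _ hy; simp [hy]
      · intro h; exact absurd (Finset.mem_univ a) h
    rw [h2] at hconv'
    intro h0
    rw [h0] at hconv'
    simp at hconv'
  obtain ⟨f, _, hf⟩ := Finset.exists_ne_zero_of_sum_ne_zero hsum
  refine ⟨f, zmod2_ne_zero fun h => hf (by simp [h]),
    zmod2_ne_zero fun h => hf (by simp [h])⟩

open GCx in
/-- Case (1) of the square-removal lemma: if `a,b,c,d`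
form a square whose only components to the rest of the basis are divisible by
`UV`, and `e` has a diagonal arrow `⟨∂e, UVa⟩ = 1` into the corner `a`, then
there are `f, g` with `⟨∂e, Uf⟩ = ⟨∂f, UVb⟩ = ⟨∂e, Vg⟩ = ⟨∂g, UVc⟩ = 1`. -/
theorem square_incoming_diagonal_at_corner
    (C : GCx) (hC : C.IsComplexPoly) (hCred : C.Reduced) (a b c d : C.B)
    (hdist : a ≠ b ∧ a ≠ c ∧ a ≠ d ∧ b ≠ c ∧ b ≠ d ∧ c ≠ d)
    (hin : ∀ x y : C.B, (x = a ∨ x = b ∨ x = c ∨ x = d) →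
      (y = a ∨ y = b ∨ y = c ∨ y = d) → ∀ u v : ℕ,
      (C.d x y u v ≠ 0 ↔
        ((x, y, u, v) = (a, b, 1, 0) ∨ (x, y, u, v) = (a, c, 0, 1) ∨
         (x, y, u, v) = (b, d, 0, 1) ∨ (x, y, u, v) = (c, d, 1, 0))))
    (hcross : ∀ x y : C.B, (x = a ∨ x = b ∨ x = c ∨ x = d) →
      ¬(y = a ∨ y = b ∨ y = c ∨ y = d) → ∀ u v : ℕ, (u = 0 ∨ v = 0) →
      C.d x y u v = 0 ∧ C.d y x u v = 0)
    (e : C.B) (he : C.d e a 1 1 = 1) :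
    ∃ f g : C.B, C.d e f 1 0 = 1 ∧ C.d f b 1 1 = 1 ∧
      C.d e g 0 1 = 1 ∧ C.d g c 1 1 = 1 := by
  classical
  obtain ⟨hab, hac, had, hbc, hbd, hcd⟩ := hdist
  have hsq_b : (b = a ∨ b = b ∨ b = c ∨ b = d) := Or.inr (Or.inl rfl)
  have hsq_c : (c = a ∨ c = b ∨ c = c ∨ c = d) := Or.inr (Or.inr (Or.inl rfl))
  -- part 1 : existence of f
  have h10b : ∀ y, C.d y b 1 0 = if y = a then 1 else 0 := by
    intro y
    by_cases hy : y = a ∨ y = b ∨ y = c ∨ y = d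
    · by_cases hya : y = a
      · rw [if_pos hya]; subst hya
        exact zmod2_ne_zero ((hin y b hy hsq_b 1 0).mpr (Or.inl rfl))
      · rw [if_neg hya]
        by_contra h
        rcases (hin y b hy hsq_b 1 0).mp h with h' | h' | h' | h' <;> simp at h'
        · exact hya h'
        · exact hbd h'.2
    · rw [if_neg fun h => hy (Or.inl h)]
      exact (hcross b y hsq_b hy 1 0 (Or.inr rfl)).2
  have h01b : ∀ y, C.d y b 0 1 = 0 := by
    intro y
    by_cases hy : y = a ∨ y = b ∨ y = c ∨ y = d
    · by_contra h
      rcases (hin y b hy hsq_b 0 1).mp h with h' | h' | h' | h' <;> simp at h'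
      · exact hbc h'.2
      · exact hbd h'.2
    · exact (hcross b y hsq_b hy 0 1 (Or.inl rfl)).2
  have h20b : ∀ y, C.d y b 2 0 = 0 := by
    intro y
    by_cases hy : y = a ∨ y = b ∨ y = c ∨ y = d
    · by_contra h
      rcases (hin y b hy hsq_b 2 0).mp h with h' | h' | h' | h' <;> simp at h'
    · exact (hcross b y hsq_b hy 2 0 (Or.inr rfl)).2
  obtain ⟨f, hf1, hf2⟩ := aux_key C.d e a b (hC.2 e b 2 1) hCred h10b h01b h20b he
  -- part 2 : existence of g, via the transposed differential
  set D : C.B → C.B → ℕ → ℕ → ZMod 2 := fun x y u v => C.d x y v u with hD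
  have hconvc : GCx.conv D D e c 2 1 = 0 := by
    rw [← hC.2 e c 1 2]
    unfold GCx.conv
    exact Finset.sum_congr rfl fun y _ => Finset.sum_comm
  have h10c : ∀ y, D y c 1 0 = if y = a then 1 else 0 := by
    intro y
    show C.d y c 0 1 = _
    by_cases hy : y = a ∨ y = b ∨ y = c ∨ y = d
    · by_cases hya : y = a
      · rw [if_pos hya]; subst hya
        exact zmod2_ne_zero ((hin y c hy hsq_c 0 1).mpr (Or.inr (Or.inl rfl)))
      · rw [if_neg hya]
        by_contra h
        rcases (hin y c hy hsq_c 0 1).mp h with h' | h' | h' | h' <;> simp at h'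
        · exact hya h'
        · exact hcd h'.2
    · rw [if_neg fun h => hy (Or.inl h)]
      exact (hcross c y hsq_c hy 0 1 (Or.inl rfl)).2
  have h01c : ∀ y, D y c 0 1 = 0 := by
    intro y
    show C.d y c 1 0 = 0
    by_cases hy : y = a ∨ y = b ∨ y = c ∨ y = d
    · by_contra h
      rcases (hin y c hy hsq_c 1 0).mp h with h' | h' | h' | h' <;> simp at h'
      · exact hbc h'.2.symm
      · exact hcd h'.2
    · exact (hcross c y hsq_c hy 1 0 (Or.inr rfl)).2
  have h20c : ∀ y, D y c 2 0 = 0 := by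
    intro y
    show C.d y c 0 2 = 0
    by_cases hy : y = a ∨ y = b ∨ y = c ∨ y = d
    · by_contra h
      rcases (hin y c hy hsq_c 0 2).mp h with h' | h' | h' | h' <;> simp at h'
    · exact (hcross c y hsq_c hy 0 2 (Or.inl rfl)).2
  have hred' : ∀ x y, D x y 0 0 = 0 := fun x y => hCred x y
  obtain ⟨g, hg1, hg2⟩ := aux_key D e a c hconvc hred' h10c h01c h20c he
  exact ⟨f, g, hf1, hf2, hg1, hg2⟩
end

section
/- Let C be a reduced bigraded complex over F[U,V] with basis B containing distinct elements a, b, c, d such that the only nonzero coefficients ⟨∂x, U^{a'}V^{b'} y⟩ with x, y ∈ {a,b,c,d} are ⟨∂a, Ub⟩ = ⟨∂a, Vc⟩ = ⟨∂b, Vd⟩ = ⟨∂c, Ud⟩ = 1, and such that every component of ∂ between {a,b,c,d} and the remaining basis elements is divisible by UV (i.e., for x ∈ {a,b,c,d}, y ∈ B∖{a,b,c,d}, and a', b' ≥ 0 with min(a',b') = 0, one has ⟨∂x, U^{a'}V^{b'}y⟩ = ⟨∂y, U^{a'}V^{b'}x⟩ = 0). If e ∈ B satisfies ⟨∂e, UVb⟩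 = 1, then there exists a basis element f with ⟨∂e, Vf⟩ = 1 and ⟨∂f, UVd⟩ = 1. -/
open Finset

open GCx in
/-- Case (2) of the square-removal lemma: with the same
square `a,b,c,d` as in Statement 11, an incoming diagonal arrow
`⟨∂e, UVb⟩ = 1` at `b` forces `f` with `⟨∂e, Vf⟩ = 1` and `⟨∂f, UVd⟩ = 1`. -/
theorem square_incoming_diagonal_at_b
    (C : GCx) (hC : C.IsComplexPoly) (hCred : C.Reduced) (a b c d : C.B)
    (hdist : a ≠ b ∧ a ≠ c ∧ a ≠ d ∧ b ≠ c ∧ b ≠ d ∧ c ≠ d)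
    (hin : ∀ x y : C.B, (x = a ∨ x = b ∨ x = c ∨ x = d) →
      (y = a ∨ y = b ∨ y = c ∨ y = d) → ∀ u v : ℕ,
      (C.d x y u v ≠ 0 ↔
        ((x, y, u, v) = (a, b, 1, 0) ∨ (x, y, u, v) = (a, c, 0, 1) ∨
         (x, y, u, v) = (b, d, 0, 1) ∨ (x, y, u, v) = (c, d, 1, 0))))
    (hcross : ∀ x y : C.B, (x = a ∨ x = b ∨ x = c ∨ x = d) →
      ¬(y = a ∨ y = b ∨ y = c ∨ y = d) → ∀ u v : ℕ, (u = 0 ∨ v = 0) →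
      C.d x y u v = 0 ∧ C.d y x u v = 0)
    (e : C.B) (he : C.d e b 1 1 = 1) :
    ∃ f : C.B, C.d e f 0 1 = 1 ∧ C.d f d 1 1 = 1 := by
  classical
  obtain ⟨hdeg, hdd⟩ := hC
  obtain ⟨hab, hac, had, hbc, hbd, hcd⟩ := hdist
  have hone : ∀ x : ZMod 2, x ≠ 0 → x = 1 := by decide
  have hmul : ∀ x y : ZMod 2, x * y ≠ 0 → x = 1 ∧ y = 1 := by decide
  have haddone : ∀ x : ZMod 2, x + 1 = 0 → x = 1 := by decide
  have hdSq : d = a ∨ d = b ∨ d = c ∨ d = d := Or.inr (Or.inr (Or.inr rfl))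
  -- e is not in the square
  have heS : ¬(e = a ∨ e = b ∨ e = c ∨ e = d) := by
    intro h
    have h1 : C.d e b 1 1 ≠ 0 := by rw [he]; exact one_ne_zero
    have h2 := (hin e b h (Or.inr (Or.inl rfl)) 1 1).mp h1
    rcases h2 with h2 | h2 | h2 | h2 <;> simp [Prod.ext_iff] at h2
  have key := hdd e d 1 2
  simp only [GCx.conv] at key
  have step : ∀ y : C.B,
      (∑ a₁ ∈ Finset.range (1 + 1), ∑ b₁ ∈ Finset.range (2 + 1),
        C.d e y a₁ b₁ * C.d y d (1 - a₁) (2 - b₁))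
      = C.d e y 0 1 * C.d y d 1 1 + (if y = b then 1 else 0) := by
    intro y
    have A0 : C.d e y 0 0 = 0 := hCred e y
    have B00 : C.d y d 0 0 = 0 := hCred y d
    by_cases hy : y = a ∨ y = b ∨ y = c ∨ y = d
    · have A2 : C.d e y 0 2 = 0 := (hcross y e hy heS 0 2 (Or.inl rfl)).2
      have B11 : C.d y d 1 1 = 0 := by
        by_contra h
        have h2 := (hin y d hy hdSq 1 1).mp h
        rcases h2 with h2 | h2 | h2 | h2 <;> simp [Prod.ext_iff] at h2
      have B02 : C.d y d 0 2 = 0 := by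
        by_contra h
        have h2 := (hin y d hy hdSq 0 2).mp h
        rcases h2 with h2 | h2 | h2 | h2 <;> simp [Prod.ext_iff] at h2
      by_cases hyb : y = b
      · subst hyb
        have B01 : C.d y d 0 1 = 1 :=
          hone _ ((hin y d hy hdSq 0 1).mpr (Or.inr (Or.inr (Or.inl rfl))))
        simp [Finset.sum_range_succ, A0, A2, B00, B01, B02, B11, he]
      · have B01 : C.d y d 0 1 = 0 := by
          by_contra h
          have h2 := (hin y d hy hdSq 0 1).mp h
          rcases h2 with h2 | h2 | h2 | h2
          · simp [Prod.ext_iff] at h2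
          · simp [Prod.ext_iff] at h2; exact hcd h2.2.symm
          · simp [Prod.ext_iff] at h2; exact hyb h2
          · simp [Prod.ext_iff] at h2
        simp [Finset.sum_range_succ, A0, A2, B00, B01, B02, B11, hyb]
    · have hyb : y ≠ b := fun h => hy (Or.inr (Or.inl h))
      have B10 : C.d y d 1 0 = 0 := (hcross d y hdSq hy 1 0 (Or.inr rfl)).2
      have B02 : C.d y d 0 2 = 0 := (hcross d y hdSq hy 0 2 (Or.inl rfl)).2
      have B01 : C.d y d 0 1 = 0 := (hcross d y hdSq hy 0 1 (Or.inl rfl)).2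
      simp [Finset.sum_range_succ, A0, B00, B10, B01, B02, hyb]
  rw [Finset.sum_congr rfl (fun y _ => step y), Finset.sum_add_distrib,
    Finset.sum_ite_eq' Finset.univ b (fun _ => (1 : ZMod 2))] at key
  simp only [Finset.mem_univ, if_true] at key
  have hs : (∑ y : C.B, C.d e y 0 1 * C.d y d 1 1) = 1 := haddone _ key
  obtain ⟨f, -, hf⟩ := Finset.exists_ne_zero_of_sum_ne_zero
    (by rw [hs]; exact one_ne_zero :
      (∑ y : C.B, C.d e y 0 1 * C.d y d 1 1) ≠ 0)
  exact ⟨f, (hmul _ _ hf).1, (hmul _ _ hf).2⟩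
end

section
/- Let C be a reduced bigraded complex over F[U,V] with basis B containing distinct elements a, b, e, f such that ∂b = U²a + UVe exactly (i.e., ⟨∂b, U²a⟩ = ⟨∂b, UVe⟩ = 1 and all other coefficients ⟨∂b, U^{a'}V^{b'}y⟩ vanish) and ⟨∂e, Uf⟩ = 1. Then ⟨∂a, Vf⟩ = 1. (This is the step showing that a loop whose endpoint has an outgoing horizontal arrow of length 1 completes to the special shape.) -/
open Finset

open GCx in
/-- If `∂b = U²a + UVe` exactly and `⟨∂e, Uf⟩ = 1`, then
`⟨∂a, Vf⟩ = 1`: a loop whose endpoint has an outgoing horizontal arrow of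
length 1 completes to the special shape. -/
theorem loop_completes_to_special_shape
    (C : GCx) (hC : C.IsComplexPoly) (hCred : C.Reduced) (a b e f : C.B)
    (hdist : a ≠ b ∧ a ≠ e ∧ a ≠ f ∧ b ≠ e ∧ b ≠ f ∧ e ≠ f)
    (hba : C.d b a 2 0 = 1) (hbe : C.d b e 1 1 = 1)
    (hexact : ∀ (y : C.B) (u v : ℕ), C.d b y u v ≠ 0 →
      (y = a ∧ u = 2 ∧ v = 0) ∨ (y = e ∧ u = 1 ∧ v = 1))
    (hef : C.d e f 1 0 = 1) :
    C.d a f 0 1 = 1 := by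
  obtain ⟨hab, hae, haf, hbe', hbf, hef'⟩ := hdist
  have h0 := hC.2 b f 2 1
  unfold conv at h0
  set g : C.B → ZMod 2 := fun y =>
    ∑ a₁ ∈ Finset.range (2 + 1), ∑ b₁ ∈ Finset.range (1 + 1),
      C.d b y a₁ b₁ * C.d y f (2 - a₁) (1 - b₁) with hg
  have hda : ∀ u v : ℕ, (u ≠ 2 ∨ v ≠ 0) → C.d b a u v = 0 := by
    intro u v huv
    by_contra h
    rcases hexact a u v h with ⟨_, h2, h3⟩ | ⟨h1, _, _⟩
    · tauto
    · exact hae h1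
  have hde : ∀ u v : ℕ, (u ≠ 1 ∨ v ≠ 1) → C.d b e u v = 0 := by
    intro u v huv
    by_contra h
    rcases hexact e u v h with ⟨h1, _, _⟩ | ⟨_, h2, h3⟩
    · exact hae h1.symm
    · tauto
  have hga : g a = C.d a f 0 1 := by
    have h00 := hda 0 0 (Or.inl (by norm_num))
    have h01 := hda 0 1 (Or.inl (by norm_num))
    have h10 := hda 1 0 (Or.inl (by norm_num))
    have h11 := hda 1 1 (Or.inl (by norm_num))
    have h21 := hda 2 1 (Or.inr (by norm_num))
    simp [hg, Finset.sum_range_succ, h00, h01, h10, h11, h21, hba]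
  have hge : g e = 1 := by
    have h00 := hde 0 0 (Or.inl (by norm_num))
    have h01 := hde 0 1 (Or.inl (by norm_num))
    have h10 := hde 1 0 (Or.inr (by norm_num))
    have h20 := hde 2 0 (Or.inl (by norm_num))
    have h21 := hde 2 1 (Or.inl (by norm_num))
    simp [hg, Finset.sum_range_succ, h00, h01, h10, h20, h21, hbe, hef]
  have hzero : ∀ y ∈ Finset.univ, y ≠ a ∧ y ≠ e → g y = 0 := by
    intro y _ ⟨hya, hye⟩
    have hd : ∀ u v : ℕ, C.d b y u v = 0 := by
      intro u v
      by_contra h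
      rcases hexact y u v h with ⟨h1, _, _⟩ | ⟨h1, _, _⟩
      · exact hya h1
      · exact hye h1
    simp [hg, hd]
  have hsum : g a + g e = 0 := by
    rw [← Finset.sum_eq_add_of_mem a e (Finset.mem_univ a) (Finset.mem_univ e)
      hae hzero]
    exact h0
  rw [hga, hge] at hsum
  have h2 : (2 : ZMod 2) = 0 := rfl
  linear_combination hsum - h2
end
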